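/- arXiv:math/0206236 — 5 statements merged into one kernel-verified Lean document; each statement's English description precedes it below -/
import Mathlib

section
/- Let Γ be a finitely generated dense subgroup of the d-dimensional torus 𝕋^d. Then Γ contains d elements that generate a dense subgroup of 𝕋^d. -/
/-!
A subgroup `H` of `𝕋^d` is dense iff no nonzero character `n ∈ ℤ^d` is trivial on it. Indeed,
if `x₀` lies outside the closure `K` of `H`, then the Haar measure of `K` and its translate by
`x₀` have the same Fourier coefficients (all vanish except the constant one, by invariance under
`H`), so they coincide, which is absurd since they live on the disjoint cosets `K` and `x₀ + K`.

Lifting generators `g_j` of `Γ` to `x_j ∈ ℝ^d`, the character `n` is trivial on `g_j` iff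
`n ⬝ x_j ∈ ℤ`. The rational vectors `q` with `q ⬝ x_j ∈ ℚ` form a subspace `V_j` of `ℚ^d`, and
clearing denominators shows that the `V_j` intersect in `0` because no nonzero character is trivial
on `Γ`. Each `V_j` not containing the current intersection lowers its dimension, so at most `d` of
them already intersect in `0`, and the corresponding `g_j` generate a dense subgroup.
-/

open MeasureTheory Module Complex Real BoundedContinuousFunction

theorem Submodule.exists_subset_card_le_finrank_iInf_eq_bot {K V ι : Type*} [DivisionRing K]
    [AddCommGroup V] [Module K V] [FiniteDimensional K V] (p : ι → Submodule K V) (s : Finset ι)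
    (h : ⨅ i ∈ s, p i = ⊥) : ∃ t ⊆ s, t.card ≤ finrank K V ∧ ⨅ i ∈ t, p i = ⊥ := by
  classical
  suffices ∀ W : Submodule K V, ∃ t ⊆ s, t.card ≤ finrank K W ∧ W ⊓ ⨅ i ∈ t, p i = ⊥ by
    simpa using this ⊤
  intro W
  induction hW : finrank K W using Nat.strong_induction_on generalizing W with
  | _ m ih =>
    by_cases hbot : W = ⊥
    · exact ⟨∅, Finset.empty_subset s, by simp, by simp [hbot]⟩
    obtain ⟨j, hjs, hj⟩ : ∃ j ∈ s, ¬ W ≤ p j := by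
      by_contra! hle
      exact hbot (eq_bot_iff.2 (h ▸ le_iInf₂ hle))
    have hlt : finrank K ↥(W ⊓ p j) < m :=
      hW ▸ Submodule.finrank_lt_finrank_of_lt (inf_lt_left.2 hj)
    obtain ⟨t, hts, htcard, ht⟩ := ih _ hlt (W ⊓ p j) rfl
    refine ⟨insert j t, Finset.insert_subset hjs hts,
      (Finset.card_insert_le j t).trans (by omega), ?_⟩
    rwa [Finset.iInf_insert, ← inf_assoc]

theorem Rat.exists_int_ne_zero_forall_mul_eq_int {ι : Type*} [Fintype ι] (f : ι → ℚ) :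
    ∃ N : ℤ, N ≠ 0 ∧ ∀ i, ∃ z : ℤ, N * f i = z := by
  obtain ⟨⟨N, hN⟩, hNf⟩ :=
    IsLocalization.exist_integer_multiples (nonZeroDivisors ℤ) Finset.univ f
  refine ⟨N, nonZeroDivisors.ne_zero hN, fun i ↦ ?_⟩
  obtain ⟨z, hz⟩ := hNf i (Finset.mem_univ i)
  exact ⟨z, by simpa [zsmul_eq_mul] using hz.symm⟩

section RationalRelations

variable {d : Type*} [Fintype d]

noncomputable def ratRelations (v : d → ℝ) : Submodule ℚ (d → ℚ) :=
  (LinearMap.range (Algebra.linearMap ℚ ℝ)).comap (Fintype.linearCombination ℚ v)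

lemma mem_ratRelations {v : d → ℝ} {q : d → ℚ} :
    q ∈ ratRelations v ↔ ∃ r : ℚ, ∑ i, q i * v i = r := by
  simp [ratRelations, Fintype.linearCombination_apply, Rat.smul_def, eq_comm]

theorem iInf_ratRelations_eq_bot {ι : Type*} (S : Finset ι) (x : ι → d → ℝ)
    (hS : ∀ n : d → ℤ, (∀ j ∈ S, ∃ k : ℤ, ∑ i, n i * x j i = k) → n = 0) :
    ⨅ j ∈ S, ratRelations (x j) = ⊥ := by
  refine eq_bot_iff.2 fun q hq ↦ ?_
  simp only [Submodule.mem_iInf, mem_ratRelations] at hq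
  choose r hr using hq
  obtain ⟨N, hN, hNz⟩ :=
    Rat.exists_int_ne_zero_forall_mul_eq_int (Sum.elim q fun j : S ↦ r j j.2)
  choose z hz using hNz
  have hq (i : d) : (N * q i : ℚ) = z (.inl i) := hz (.inl i)
  have hr' (j : ι) (hj : j ∈ S) : (N * r j hj : ℚ) = z (.inr ⟨j, hj⟩) := hz (.inr ⟨j, hj⟩)
  have hNq : (fun i ↦ z (.inl i)) = 0 := hS _ fun j hj ↦ ⟨z (.inr ⟨j, hj⟩), by
    rw [← Rat.cast_intCast (z _), ← hr' j hj, Rat.cast_mul, ← hr j hj, Finset.mul_sum]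
    refine Finset.sum_congr rfl fun i _ ↦ ?_
    rw [← Rat.cast_intCast (z _), ← hq i]
    push_cast
    ring⟩
  ext i
  have := hq i
  simp only [congrFun hNq i, Pi.zero_apply, Int.cast_zero] at this
  simpa [hN] using this

theorem exists_subset_card_le_of_forall_sum_mul_eq_int {ι : Type*} (S : Finset ι)
    (x : ι → d → ℝ) (hS : ∀ n : d → ℤ, (∀ j ∈ S, ∃ k : ℤ, ∑ i, n i * x j i = k) → n = 0) :
    ∃ T ⊆ S, T.card ≤ Fintype.card d ∧
      ∀ n : d → ℤ, (∀ j ∈ T, ∃ k : ℤ, ∑ i, n i * x j i = k) → n = 0 := by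
  obtain ⟨T, hTS, hTcard, hT⟩ :=
    Submodule.exists_subset_card_le_finrank_iInf_eq_bot _ S (iInf_ratRelations_eq_bot S x hS)
  refine ⟨T, hTS, by simpa using hTcard, fun n hn ↦ ?_⟩
  have hmem : (fun i ↦ (n i : ℚ)) ∈ ⨅ j ∈ T, ratRelations (x j) := by
    simp only [Submodule.mem_iInf, mem_ratRelations]
    intro j hj
    obtain ⟨k, hk⟩ := hn j hj
    exact ⟨k, by simpa using hk⟩
  rw [hT, Submodule.mem_bot] at hmem
  ext i
  simpa using congrFun hmem i

end RationalRelations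

namespace UnitAddTorus

variable {d : Type*} [Fintype d]

lemma mFourier_apply_add (n : d → ℤ) (x y : UnitAddTorus d) :
    mFourier n (x + y) = mFourier n x * mFourier n y := by
  simp only [mFourier, ContinuousMap.coe_mk, Pi.add_apply, fourier_apply, smul_add,
    AddCircle.toCircle_add, Circle.coe_mul, Finset.prod_mul_distrib]

lemma mFourier_apply_zero (n : d → ℤ) : mFourier n 0 = 1 := by
  simp [mFourier]

lemma mFourier_apply_coe (n : d → ℤ) (x : d → ℝ) :
    mFourier n (fun i ↦ (x i : UnitAddCircle)) = cexp (2 * π * I * (∑ i, n i * x i : ℝ)) := by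
  simp only [mFourier, ContinuousMap.coe_mk, fourier_coe_apply, ← Complex.exp_sum]
  push_cast
  rw [Finset.mul_sum]
  refine congrArg cexp (Finset.sum_congr rfl fun i _ ↦ ?_)
  ring

lemma mFourier_apply_coe_eq_one_iff (n : d → ℤ) (x : d → ℝ) :
    mFourier n (fun i ↦ (x i : UnitAddCircle)) = 1 ↔ ∃ k : ℤ, ∑ i, n i * x i = k := by
  rw [mFourier_apply_coe, Complex.exp_eq_one_iff]
  refine exists_congr fun k ↦ ?_
  rw [mul_comm, mul_left_inj' (by simp [Real.pi_ne_zero, I_ne_zero])]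
  exact_mod_cast Iff.rfl

lemma eq_zero_of_forall_mFourier_eq_one {n : d → ℤ} (h : ∀ x, mFourier n x = 1) : n = 0 := by
  classical
  ext i
  by_contra hi
  have hi' : (n i : ℝ) ≠ 0 := by exact_mod_cast hi
  obtain ⟨k, hk⟩ := (mFourier_apply_coe_eq_one_iff n (Pi.single i (1 / (2 * n i)))).1 (h _)
  have hk' : (2 * k : ℝ) = 1 := by
    simp only [Pi.single_apply, mul_ite, mul_zero, Finset.sum_ite_eq', Finset.mem_univ,
      if_true] at hk
    rw [← hk]
    field_simp
  have : 2 * k = 1 := by exact_mod_cast hk'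
  omega

lemma integral_eq_of_mem_span_mFourier {μ ν : Measure (UnitAddTorus d)} [IsFiniteMeasure μ]
    [IsFiniteMeasure ν] (h : ∀ n, ∫ x, mFourier n x ∂μ = ∫ x, mFourier n x ∂ν)
    {f : C(UnitAddTorus d, ℂ)} (hf : f ∈ Submodule.span ℂ (Set.range mFourier)) :
    ∫ x, f x ∂μ = ∫ x, f x ∂ν := by
  induction hf using Submodule.span_induction with
  | mem f hf => obtain ⟨n, rfl⟩ := hf; exact h n
  | zero => simp
  | add f g _ _ hf hg =>
    have hint (ρ : Measure (UnitAddTorus d)) [IsFiniteMeasure ρ] (u : C(UnitAddTorus d, ℂ)) :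
        Integrable u ρ :=
      u.continuous.integrable_of_hasCompactSupport (.of_compactSpace u)
    simp only [ContinuousMap.add_apply]
    rw [integral_add (hint μ f) (hint μ g), integral_add (hint ν f) (hint ν g), hf, hg]
  | smul c f _ hf => simp only [ContinuousMap.smul_apply, integral_smul, hf]

theorem measure_ext_of_integral_mFourier_eq {μ ν : Measure (UnitAddTorus d)} [IsFiniteMeasure μ]
    [IsFiniteMeasure ν] (h : ∀ n, ∫ x, mFourier n x ∂μ = ∫ x, mFourier n x ∂ν) : μ = ν := by
  refine ext_of_forall_mem_subalgebra_integral_eq_of_polish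
    (A := (mFourierSubalgebra d).comap (toContinuousMapStarₐ ℂ)) ?_
    fun g hg ↦ integral_eq_of_mem_span_mFourier h ?_
  · intro x y hxy
    obtain ⟨_, ⟨f, hf, rfl⟩, hfxy⟩ := mFourierSubalgebra_separatesPoints hxy
    exact ⟨_, ⟨_, ⟨mkOfCompact f, hf, rfl⟩, rfl⟩, hfxy⟩
  · rw [← mFourierSubalgebra_coe]
    exact hg

lemma integral_mFourier_map_add_left (μ : Measure (UnitAddTorus d)) (n : d → ℤ)
    (y : UnitAddTorus d) :
    ∫ x, mFourier n x ∂(μ.map (y + ·)) = mFourier n y * ∫ x, mFourier n x ∂μ := by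
  rw [integral_map (measurable_const_add y).aemeasurable
    (mFourier n).continuous.aestronglyMeasurable, ← integral_const_mul]
  simp only [mFourier_apply_add]

lemma integral_mFourier_eq_zero_of_map_add_left_eq_self {μ : Measure (UnitAddTorus d)}
    {n : d → ℤ} {y : UnitAddTorus d} (hμ : μ.map (y + ·) = μ) (hy : mFourier n y ≠ 1) :
    ∫ x, mFourier n x ∂μ = 0 := by
  have h := integral_mFourier_map_add_left μ n y
  rw [hμ, eq_comm, ← sub_eq_zero, ← sub_one_mul] at h
  exact (mul_eq_zero.1 h).resolve_left (sub_ne_zero.2 hy)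

theorem eq_top_of_isClosed_of_forall_mFourier_ne_one {K : AddSubgroup (UnitAddTorus d)}
    (hK : IsClosed (K : Set (UnitAddTorus d))) (h : ∀ n ≠ 0, ∃ y ∈ K, mFourier n y ≠ 1) :
    K = ⊤ := by
  by_contra hne
  obtain ⟨x₀, hx₀⟩ : ∃ x₀, x₀ ∉ K := by
    by_contra! hall
    exact hne ((AddSubgroup.eq_top_iff' K).2 hall)
  have : CompactSpace K := isCompact_iff_compactSpace.mp hK.isCompact
  have : LocallyCompactSpace K := WeaklyLocallyCompactSpace.locallyCompactSpace
  let μ : Measure (UnitAddTorus d) := (Measure.addHaar : Measure K).map Subtype.val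
  have hinv (y : UnitAddTorus d) (hy : y ∈ K) : μ.map (y + ·) = μ := calc
    μ.map (y + ·) = ((Measure.addHaar : Measure K).map ((⟨y, hy⟩ : K) + ·)).map Subtype.val := by
      rw [Measure.map_map (measurable_const_add y) measurable_subtype_coe,
        Measure.map_map measurable_subtype_coe (measurable_const_add _)]
      rfl
    _ = μ := by rw [map_add_left_eq_self]
  have htrans : μ.map (x₀ + ·) = μ := measure_ext_of_integral_mFourier_eq fun n ↦ by
    rw [integral_mFourier_map_add_left]
    rcases eq_or_ne n 0 with rfl | hn
    · rw [mFourier_zero, ContinuousMap.one_apply, one_mul]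
    · obtain ⟨y, hyK, hy⟩ := h n hn
      rw [integral_mFourier_eq_zero_of_map_add_left_eq_self (hinv y hyK) hy, mul_zero]
  have hμK : μ K ≠ 0 := by
    rw [Measure.map_apply measurable_subtype_coe hK.measurableSet, Subtype.coe_preimage_self]
    exact NeZero.ne _
  refine hμK ?_
  rw [← htrans, Measure.map_apply (measurable_const_add x₀) hK.measurableSet,
    Measure.map_apply measurable_subtype_coe (hK.measurableSet.preimage (measurable_const_add x₀))]
  convert measure_empty (μ := (Measure.addHaar : Measure K))
  refine Set.eq_empty_of_forall_notMem fun k hk ↦ hx₀ ?_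
  simpa using K.sub_mem hk k.2

theorem dense_iff_forall_mFourier_eq_one {H : AddSubgroup (UnitAddTorus d)} :
    Dense (H : Set (UnitAddTorus d)) ↔ ∀ n, (∀ y ∈ H, mFourier n y = 1) → n = 0 := by
  refine ⟨fun hH n hn ↦ eq_zero_of_forall_mFourier_eq_one fun x ↦ ?_, fun h ↦ ?_⟩
  · exact congrFun ((mFourier n).continuous.ext_on hH continuous_const hn) x
  · have htop : H.topologicalClosure = ⊤ :=
      eq_top_of_isClosed_of_forall_mFourier_ne_one H.isClosed_topologicalClosure fun n hn ↦ by
        by_contra! hall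
        exact hn (h n fun y hy ↦ hall y (H.le_topologicalClosure hy))
    rw [dense_iff_closure_eq, ← H.topologicalClosure_coe, htop, AddSubgroup.coe_top]

theorem dense_closure_iff_forall_mFourier_eq_one {s : Set (UnitAddTorus d)} :
    Dense (AddSubgroup.closure s : Set (UnitAddTorus d)) ↔
      ∀ n, (∀ y ∈ s, mFourier n y = 1) → n = 0 := by
  rw [dense_iff_forall_mFourier_eq_one]
  refine forall_congr' fun n ↦ imp_congr_left
    ⟨fun h y hy ↦ h y (AddSubgroup.subset_closure hy), fun h y hy ↦ ?_⟩
  induction hy using AddSubgroup.closure_induction with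
  | mem y hy => exact h y hy
  | zero => exact mFourier_apply_zero n
  | add y z _ _ hy hz => rw [mFourier_apply_add, hy, hz, one_mul]
  | neg y _ hy =>
    have := mFourier_apply_add n (-y) y
    rwa [neg_add_cancel, mFourier_apply_zero, hy, mul_one, eq_comm] at this

theorem exists_subset_card_le_dense_closure (S : Finset (UnitAddTorus d))
    (hS : Dense (AddSubgroup.closure (S : Set (UnitAddTorus d)) : Set (UnitAddTorus d))) :
    ∃ T ⊆ S, T.card ≤ Fintype.card d ∧
      Dense (AddSubgroup.closure (T : Set (UnitAddTorus d)) : Set (UnitAddTorus d)) := by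
  choose x hx using fun (y : UnitAddTorus d) (i : d) ↦ QuotientAddGroup.mk_surjective (y i)
  have key (n : d → ℤ) (y : UnitAddTorus d) :
      mFourier n y = 1 ↔ ∃ k : ℤ, ∑ i, n i * x y i = k := by
    rw [← mFourier_apply_coe_eq_one_iff]
    simp only [hx]
  simp only [dense_closure_iff_forall_mFourier_eq_one, Finset.mem_coe, key] at hS ⊢
  exact exists_subset_card_le_of_forall_sum_mul_eq_int S x hS

end UnitAddTorus

theorem Finset.exists_fin_subset_range_subset_insert {α : Type*} (T : Finset α) (a : α) {n : ℕ}
    (hn : T.card ≤ n) : ∃ s : Fin n → α, ↑T ⊆ Set.range s ∧ Set.range s ⊆ insert a ↑T := by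
  refine ⟨fun i ↦ T.toList.getD i a, fun y hy ↦ ?_, ?_⟩
  · obtain ⟨i, hi, rfl⟩ := List.getElem_of_mem (Finset.mem_toList.2 hy)
    exact ⟨⟨i, by simp at hi; omega⟩, List.getD_eq_getElem _ _ hi⟩
  · rintro _ ⟨i, rfl⟩
    dsimp only
    by_cases hi : (i : ℕ) < T.toList.length
    · rw [List.getD_eq_getElem _ _ hi]
      exact Set.mem_insert_of_mem a (Finset.mem_toList.1 (List.getElem_mem hi))
    · rw [List.getD_eq_default _ _ (not_lt.1 hi)]
      exact Set.mem_insert a _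

/-- A finitely generated dense subgroup `Γ` of the `d`-dimensional torus `𝕋^d` contains `d`
elements generating a dense subgroup. -/
theorem stmt3 (d : ℕ) (Γ : AddSubgroup (Fin d → AddCircle (1 : ℝ)))
    (hFG : Γ.FG) (hΓ : Dense (Γ : Set (Fin d → AddCircle (1 : ℝ)))) :
    ∃ s : Fin d → (Fin d → AddCircle (1 : ℝ)), (∀ i, s i ∈ Γ) ∧
      Dense ((AddSubgroup.closure (Set.range s) : AddSubgroup (Fin d → AddCircle (1 : ℝ))) :
        Set (Fin d → AddCircle (1 : ℝ))) := by
  obtain ⟨S, rfl⟩ := hFG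
  obtain ⟨T, hTS, hTcard, hT⟩ := UnitAddTorus.exists_subset_card_le_dense_closure S hΓ
  obtain ⟨s, hTs, hsT⟩ := T.exists_fin_subset_range_subset_insert 0 (by simpa using hTcard)
  refine ⟨s, fun i ↦ ?_, hT.mono (AddSubgroup.closure_mono hTs)⟩
  rcases hsT ⟨i, rfl⟩ with h0 | hT
  · exact h0 ▸ zero_mem _
  · exact AddSubgroup.subset_closure (hTS hT)
end

section
/- Over a non-archimedean local field k, the standard metric d([v],[w]) = ‖v ∧ w‖/(‖v‖·‖w‖) on ℙ^{n-1}(k) is an ultrametric: d([v],[w]) ≤ max{d([v],[u]), d([u],[w])} for all nonzero u, v, w ∈ k^n. -/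
/-- The standard projective distance over a non-archimedean field: `k^n` carries the sup norm,
`Λ²k^n` the sup norm on the coordinates `v_i w_j - v_j w_i`, and
`d([v],[w]) = ‖v ∧ w‖/(‖v‖·‖w‖)`. -/
noncomputable def naProjDist {k : Type*} [NormedField k] (n : ℕ) (v w : Fin n → k) : ℝ :=
  ‖(fun p : Fin n × Fin n => v p.1 * w p.2 - v p.2 * w p.1)‖ / (‖v‖ * ‖w‖)

/-- Over a non-archimedean local field, the standard metric on `ℙ^{n-1}(k)` is an ultrametric:
`d([v],[w]) ≤ max (d([v],[u])) (d([u],[w]))` for all nonzero `u, v, w`. -/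
theorem stmt6 {k : Type*} [NormedField k] [IsUltrametricDist k] (n : ℕ)
    (u v w : Fin n → k) (hu : u ≠ 0) (hv : v ≠ 0) (hw : w ≠ 0) :
    naProjDist n v w ≤ max (naProjDist n v u) (naProjDist n u w) := by
  classical
  have hupos : (0:ℝ) < ‖u‖ := norm_pos_iff.mpr hu
  have hvpos : (0:ℝ) < ‖v‖ := norm_pos_iff.mpr hv
  have hwpos : (0:ℝ) < ‖w‖ := norm_pos_iff.mpr hw
  set fvw := (fun p : Fin n × Fin n => v p.1 * w p.2 - v p.2 * w p.1) with hfvw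
  set fvu := (fun p : Fin n × Fin n => v p.1 * u p.2 - v p.2 * u p.1) with hfvu
  set fuw := (fun p : Fin n × Fin n => u p.1 * w p.2 - u p.2 * w p.1) with hfuw
  have key : ‖fvw‖ * ‖u‖ ≤ max (‖fvu‖ * ‖w‖) (‖fuw‖ * ‖v‖) := by
    have hne : Nonempty (Fin n) := by
      rcases Function.ne_iff.mp hu with ⟨i, _⟩; exact ⟨i⟩
    obtain ⟨i, hi⟩ := Finite.exists_max (fun i => ‖u i‖)
    have hui : ‖u‖ ≤ ‖u i‖ := by
      exact (pi_norm_le_iff_of_nonneg (norm_nonneg _)).mpr hi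
    rw [← le_div_iff₀ hupos]
    refine (pi_norm_le_iff_of_nonneg (by positivity)).mpr ?_
    intro p
    rw [le_div_iff₀ hupos]
    have hid : fvw p * u i =
        (fvu (p.1, i) * w p.2 - fvu (p.2, i) * w p.1) + v i * fuw p := by
      simp only [hfvw, hfvu, hfuw]; ring
    have h1 : ‖fvu (p.1, i) * w p.2‖ ≤ ‖fvu‖ * ‖w‖ := by
      rw [norm_mul]
      exact mul_le_mul (norm_le_pi_norm fvu _) (norm_le_pi_norm w _)
        (norm_nonneg _) (norm_nonneg _)
    have h2 : ‖fvu (p.2, i) * w p.1‖ ≤ ‖fvu‖ * ‖w‖ := by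
      rw [norm_mul]
      exact mul_le_mul (norm_le_pi_norm fvu _) (norm_le_pi_norm w _)
        (norm_nonneg _) (norm_nonneg _)
    have h3 : ‖v i * fuw p‖ ≤ ‖fuw‖ * ‖v‖ := by
      rw [norm_mul, mul_comm]
      exact mul_le_mul (norm_le_pi_norm fuw _) (norm_le_pi_norm v _)
        (norm_nonneg _) (norm_nonneg _)
    calc ‖fvw p‖ * ‖u‖ ≤ ‖fvw p‖ * ‖u i‖ :=
          mul_le_mul_of_nonneg_left hui (norm_nonneg _)
      _ = ‖fvw p * u i‖ := (norm_mul _ _).symm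
      _ = ‖(fvu (p.1, i) * w p.2 - fvu (p.2, i) * w p.1) + v i * fuw p‖ := by rw [hid]
      _ ≤ max ‖fvu (p.1, i) * w p.2 - fvu (p.2, i) * w p.1‖ ‖v i * fuw p‖ :=
          IsUltrametricDist.norm_add_le_max _ _
      _ ≤ max (‖fvu‖ * ‖w‖) (‖fuw‖ * ‖v‖) := by
          refine max_le_max ?_ h3
          refine le_trans ?_ (max_le h1 h2)
          rw [sub_eq_add_neg]
          simpa using IsUltrametricDist.norm_add_le_max (fvu (p.1, i) * w p.2)
            (-(fvu (p.2, i) * w p.1))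
  rcases max_choice (‖fvu‖ * ‖w‖) (‖fuw‖ * ‖v‖) with h | h <;> rw [h] at key
  · refine le_max_of_le_left ?_
    show ‖fvw‖ / (‖v‖ * ‖w‖) ≤ ‖fvu‖ / (‖v‖ * ‖u‖)
    rw [div_le_div_iff₀ (by positivity) (by positivity)]
    nlinarith [mul_le_mul_of_nonneg_left key hvpos.le]
  · refine le_max_of_le_right ?_
    show ‖fvw‖ / (‖v‖ * ‖w‖) ≤ ‖fuw‖ / (‖u‖ * ‖w‖)
    rw [div_le_div_iff₀ (by positivity) (by positivity)]
    nlinarith [mul_le_mul_of_nonneg_left key hwpos.le]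
end

section
/- Let ε ∈ (0, 1/4) and g ∈ SL_n(ℝ) with singular values a₁(g) ≥ a₂(g) ≥ ... ≥ a_n(g) > 0. If a₂(g)/a₁(g) ≤ ε², then the projective transformation [g] is ε-contracting: there exist a point v_g ∈ ℙ^{n-1}(ℝ) and a projective hyperplane H_g such that [g] maps the complement of the ε-neighborhood of H_g into the ε-ball around v_g. Explicitly, writing g = k a k' with k, k' ∈ SO(n), one can take H_g spanned by {k'⁻¹ e_i : i ≥ 2} and v_g = [k e₁]. -/
open scoped BigOperators
open Matrix

/-- The Euclidean norm on `ℝⁿ`. -/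
noncomputable def eucNorm (n : ℕ) (v : Fin n → ℝ) : ℝ := Real.sqrt (∑ i, v i ^ 2)

/-- The Euclidean norm of the wedge product `v ∧ w` in `Λ²ℝⁿ`. -/
noncomputable def wedgeNorm (n : ℕ) (v w : Fin n → ℝ) : ℝ :=
  Real.sqrt ((∑ i, ∑ j, (v i * w j - v j * w i) ^ 2) / 2)

/-- The standard metric on `ℙ^{n-1}(ℝ)`: `d([v],[w]) = ‖v ∧ w‖ / (‖v‖‖w‖)`. -/
noncomputable def projDist (n : ℕ) (v w : Fin n → ℝ) : ℝ :=
  wedgeNorm n v w / (eucNorm n v * eucNorm n w)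

/-- The distance from a point `[v]` of `ℙ^{n-1}(ℝ)` to the projectivization of a set `H`
of nonzero vectors. -/
noncomputable def projDistSet (n : ℕ) (v : Fin n → ℝ) (H : Set (Fin n → ℝ)) : ℝ :=
  sInf {d | ∃ w, w ≠ 0 ∧ w ∈ H ∧ d = projDist n v w}

lemma lagrange_aux (n : ℕ) (u v : Fin n → ℝ) :
    ∑ i, ∑ j, (u i * v j - u j * v i) ^ 2
      = 2 * ((∑ i, u i ^ 2) * (∑ i, v i ^ 2) - (∑ i, u i * v i) ^ 2) := by
  have hi : ∀ i : Fin n, ∑ j, (u i * v j - u j * v i) ^ 2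
      = u i ^ 2 * (∑ j, v j ^ 2) + v i ^ 2 * (∑ j, u j ^ 2)
        - 2 * (u i * v i) * (∑ j, u j * v j) := by
    intro i
    simp only [Finset.mul_sum]
    rw [← Finset.sum_add_distrib, ← Finset.sum_sub_distrib]
    exact Finset.sum_congr rfl fun j _ => by ring
  rw [Finset.sum_congr rfl fun i _ => hi i, Finset.sum_sub_distrib, Finset.sum_add_distrib,
    ← Finset.sum_mul, ← Finset.sum_mul]
  rw [← Finset.sum_mul, show (∑ i, 2 * (u i * v i)) = 2 * ∑ i, u i * v i from by
    rw [Finset.mul_sum]]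
  ring

lemma wedgeNorm_eq (n : ℕ) (u v : Fin n → ℝ) :
    wedgeNorm n u v
      = Real.sqrt ((∑ i, u i ^ 2) * (∑ i, v i ^ 2) - (∑ i, u i * v i) ^ 2) := by
  unfold wedgeNorm
  rw [lagrange_aux]
  congr 1
  ring

lemma dot_mulVec_orth {n : ℕ} {K : Matrix (Fin n) (Fin n) ℝ} (h : Kᵀ * K = 1)
    (u v : Fin n → ℝ) : ∑ i, K.mulVec u i * K.mulVec v i = ∑ i, u i * v i := by
  have h2 : Kᵀ.mulVec (K.mulVec u) = u := by
    rw [Matrix.mulVec_mulVec, h, Matrix.one_mulVec]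
  calc ∑ i, K.mulVec u i * K.mulVec v i = dotProduct (K.mulVec u) (K.mulVec v) := rfl
    _ = dotProduct (Kᵀ.mulVec (K.mulVec u)) v := by
        rw [Matrix.mulVec_transpose, ← Matrix.dotProduct_mulVec]
    _ = ∑ i, u i * v i := by rw [h2]; rfl

lemma projDist_orth {n : ℕ} {K : Matrix (Fin n) (Fin n) ℝ} (h : Kᵀ * K = 1)
    (u v : Fin n → ℝ) : projDist n (K.mulVec u) (K.mulVec v) = projDist n u v := by
  have hsq : ∀ w : Fin n → ℝ, ∑ i, K.mulVec w i ^ 2 = ∑ i, w i ^ 2 := by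
    intro w
    have := dot_mulVec_orth h w w
    simpa [pow_two] using this
  unfold projDist eucNorm
  rw [wedgeNorm_eq, wedgeNorm_eq, dot_mulVec_orth h, hsq, hsq]

lemma projDist_nonneg (n : ℕ) (u v : Fin n → ℝ) : 0 ≤ projDist n u v := by
  unfold projDist wedgeNorm eucNorm
  positivity

set_option maxHeartbeats 2000000 in
/-- If `g = K·diag(a)·K'` (a Cartan decomposition with `K, K' ∈ SO(n)` and decreasing positive
diagonal of determinant one) and `a₂/a₁ ≤ ε²` with `ε < 1/4`, then `[g]` is `ε`-contracting:
it maps the complement of the `ε`-neighborhood of the repulsive hyperplane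
`H_g = [span {K'⁻¹ e_i : i ≥ 2}] = {w : (K'w)₁ = 0}` into the `ε`-ball around the attracting
point `v_g = [K e₁]`. -/
theorem stmt11 (n : ℕ) (hn : 2 ≤ n) (ε : ℝ) (hε : 0 < ε) (hε' : ε < 1 / 4)
    (K K' : Matrix (Fin n) (Fin n) ℝ)
    (hK : K ∈ Matrix.specialOrthogonalGroup (Fin n) ℝ)
    (hK' : K' ∈ Matrix.specialOrthogonalGroup (Fin n) ℝ)
    (a : Fin n → ℝ) (hpos : ∀ i, 0 < a i)
    (hmono : ∀ i j : Fin n, i ≤ j → a j ≤ a i) (hdet : ∏ i, a i = 1)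
    (hgap : a ⟨1, by omega⟩ / a ⟨0, by omega⟩ ≤ ε ^ 2)
    (g : Matrix (Fin n) (Fin n) ℝ) (hg : g = K * Matrix.diagonal a * K') :
    ∀ x : Fin n → ℝ, x ≠ 0 →
      ε ≤ projDistSet n x {w | K'.mulVec w ⟨0, by omega⟩ = 0} →
      projDist n (g.mulVec x) (K.mulVec (Pi.single ⟨0, by omega⟩ 1)) ≤ ε := by
  intro x hx hdist
  have h0n : 0 < n := by omega
  have h1n : 1 < n := by omega
  set i0 : Fin n := ⟨0, h0n⟩ with hi0
  set i1 : Fin n := ⟨1, h1n⟩ with hi1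
  -- orthogonality facts
  have hstar : ∀ A : Matrix (Fin n) (Fin n) ℝ, star A = Aᵀ := fun A => by
    ext i j; simp [Matrix.star_apply]
  obtain ⟨hKo, hKdet⟩ := Matrix.mem_specialOrthogonalGroup_iff.mp hK
  obtain ⟨hK'o, hK'det⟩ := Matrix.mem_specialOrthogonalGroup_iff.mp hK'
  have hKt : Kᵀ * K = 1 := by
    have := (Unitary.mem_iff.mp hKo).1
    rwa [hstar] at this
  have hK't : K'ᵀ * K' = 1 := by
    have := (Unitary.mem_iff.mp hK'o).1
    rwa [hstar] at this
  have hK'tt : K' * K'ᵀ = 1 := by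
    have := (Unitary.mem_iff.mp hK'o).2
    rwa [hstar] at this
  set y : Fin n → ℝ := K'.mulVec x with hy
  have hy0 : y ≠ 0 := by
    intro h0
    apply hx
    have hxy : K'ᵀ.mulVec y = x := by
      rw [hy, Matrix.mulVec_mulVec, hK't, Matrix.one_mulVec]
    rw [← hxy, h0, Matrix.mulVec_zero]
  set y' : Fin n → ℝ := fun i => if i = i0 then 0 else y i with hy'
  set P : ℝ := ∑ i, y' i ^ 2 with hP
  set Q : ℝ := ∑ i, y i ^ 2 with hQ
  have hPnn : 0 ≤ P := Finset.sum_nonneg fun i _ => sq_nonneg _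
  have hQpos : 0 < Q := by
    obtain ⟨i, hi⟩ := Function.ne_iff.mp hy0
    have hi' : y i ≠ 0 := by simpa using hi
    have h1 : 0 < y i ^ 2 := by positivity
    have h2 : y i ^ 2 ≤ Q :=
      Finset.single_le_sum (fun j _ => sq_nonneg (y j)) (Finset.mem_univ i)
    linarith
  have hsplit : Q = y i0 ^ 2 + P := by
    rw [hQ, hP]
    have h1 : ∀ i : Fin n, y i ^ 2 = (if i = i0 then y i0 ^ 2 else 0) + y' i ^ 2 := by
      intro i
      by_cases h : i = i0 <;> simp [hy', h]
    rw [Finset.sum_congr rfl fun i _ => h1 i, Finset.sum_add_distrib,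
      Finset.sum_ite_eq' Finset.univ i0 (fun _ => y i0 ^ 2)]
    simp
  have hdotyy' : ∑ i, y i * y' i = P := by
    rw [hP]
    refine Finset.sum_congr rfl fun i _ => ?_
    by_cases h : i = i0 <;> simp [hy', h, pow_two]
  -- key estimate : ε² Q ≤ y i0 ²
  have hkey : ε ^ 2 * Q ≤ y i0 ^ 2 := by
    rcases eq_or_lt_of_le hPnn with hP0 | hPpos
    · -- y' = 0, so Q = y i0 ^ 2
      have : Q = y i0 ^ 2 := by rw [hsplit, ← hP0]; ring
      rw [this]
      have hε1 : ε ^ 2 ≤ 1 := by nlinarith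
      nlinarith [sq_nonneg (y i0)]
    · -- use the hypothesis with w = K'ᵀ y'
      have hy'0 : y' ≠ 0 := by
        intro h0
        rw [hP, h0] at hPpos
        simp at hPpos
      set w : Fin n → ℝ := K'ᵀ.mulVec y' with hw
      have hK'w : K'.mulVec w = y' := by
        rw [hw, Matrix.mulVec_mulVec, hK'tt, Matrix.one_mulVec]
      have hw0 : w ≠ 0 := by
        intro h0
        apply hy'0
        rw [← hK'w, h0, Matrix.mulVec_zero]
      have hle : ε ≤ projDist n x w := by
        refine le_trans hdist ?_
        apply csInf_le
        · exact ⟨0, fun d ⟨w', _, _, hd⟩ => hd ▸ projDist_nonneg n x w'⟩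
        · refine ⟨w, hw0, ?_, rfl⟩
          show K'.mulVec w _ = 0
          rw [hK'w]
          simp [hy']
      have hxy : projDist n x w = projDist n y y' := by
        rw [← projDist_orth hK't x w, ← hy, hK'w]
      rw [hxy] at hle
      have hyy' : projDist n y y' = |y i0| / Real.sqrt Q := by
        unfold projDist eucNorm
        rw [wedgeNorm_eq, hdotyy', ← hP, ← hQ]
        have h1 : Q * P - P ^ 2 = y i0 ^ 2 * P := by rw [hsplit]; ring
        rw [h1, Real.sqrt_mul (sq_nonneg _), Real.sqrt_sq_eq_abs]
        have hsP : Real.sqrt P ≠ 0 := by positivity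
        have hsQ : Real.sqrt Q ≠ 0 := by positivity
        field_simp
      rw [hyy', le_div_iff₀ (by positivity)] at hle
      have h2 := mul_self_le_mul_self (by positivity) hle
      have h3 : Real.sqrt Q * Real.sqrt Q = Q := Real.mul_self_sqrt hQpos.le
      have h4 : |y i0| * |y i0| = y i0 ^ 2 := by rw [abs_mul_abs_self]; ring
      nlinarith
  -- now the conclusion
  set z : Fin n → ℝ := fun i => a i * y i with hz
  have hdy : (Matrix.diagonal a).mulVec y = z := by
    ext i
    rw [Matrix.mulVec_diagonal]
  have hgx : g.mulVec x = K.mulVec z := by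
    rw [hg, ← Matrix.mulVec_mulVec, ← Matrix.mulVec_mulVec, ← hy, hdy]
  set e0 : Fin n → ℝ := Pi.single i0 1 with he0
  have hgoal : projDist n (g.mulVec x) (K.mulVec e0) ≤ ε := by
    rw [hgx, projDist_orth hKt]
    set Nz : ℝ := ∑ i, z i ^ 2 with hNz
    have hE : ∑ i, e0 i ^ 2 = 1 := by
      have h1 : ∀ i : Fin n, e0 i ^ 2 = if i = i0 then 1 else 0 := by
        intro i
        by_cases h : i = i0 <;> simp [he0, h, Pi.single_apply]
      rw [Finset.sum_congr rfl fun i _ => h1 i, Finset.sum_ite_eq' Finset.univ i0 fun _ => (1:ℝ)]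
      simp
    have hD : ∑ i, z i * e0 i = z i0 := by
      have h1 : ∀ i : Fin n, z i * e0 i = if i = i0 then z i0 else 0 := by
        intro i
        by_cases h : i = i0 <;> simp [he0, h, Pi.single_apply]
      rw [Finset.sum_congr rfl fun i _ => h1 i, Finset.sum_ite_eq' Finset.univ i0 fun _ => z i0]
      simp
    -- T = sum over erase i0
    set T : ℝ := ∑ i ∈ Finset.univ.erase i0, z i ^ 2 with hT
    have hNzsplit : Nz = z i0 ^ 2 + T :=
      (Finset.add_sum_erase _ (fun i => z i ^ 2) (Finset.mem_univ i0)).symm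
    have hTnn : 0 ≤ T := Finset.sum_nonneg fun i _ => sq_nonneg _
    have hzi0 : z i0 = a i0 * y i0 := rfl
    have hyi0 : 0 < y i0 ^ 2 := lt_of_lt_of_le (mul_pos (pow_pos hε 2) hQpos) hkey
    have hyne : y i0 ≠ 0 := by
      intro h0
      rw [h0] at hyi0
      simp at hyi0
    have hzi0pos : 0 < z i0 ^ 2 := by
      rw [hzi0]
      have hne : a i0 * y i0 ≠ 0 := mul_ne_zero (hpos i0).ne' hyne
      exact lt_of_le_of_ne (sq_nonneg _) (Ne.symm (pow_ne_zero 2 hne))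
    have hNzpos : 0 < Nz := by rw [hNzsplit]; linarith
    -- T ≤ a i1 ^ 2 * Q
    have hTle : T ≤ a i1 ^ 2 * Q := by
      have h1 : T ≤ ∑ i ∈ Finset.univ.erase i0, a i1 ^ 2 * y i ^ 2 := by
        refine Finset.sum_le_sum fun i hi => ?_
        have hii : i ≠ i0 := Finset.ne_of_mem_erase hi
        have h11 : i1 ≤ i := by
          have hne : i.val ≠ 0 := fun h => hii (Fin.ext h)
          have : (1:ℕ) ≤ i.val := by omega
          exact this
        have ha1 : a i ≤ a i1 := hmono i1 i h11
        have ha2 : 0 < a i := hpos i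
        have heq : z i ^ 2 = a i ^ 2 * y i ^ 2 := by rw [hz]; ring
        have hsq : a i ^ 2 ≤ a i1 ^ 2 := by
          nlinarith [mul_le_mul ha1 ha1 ha2.le (ha2.trans_le ha1).le]
        rw [heq]
        exact mul_le_mul_of_nonneg_right hsq (sq_nonneg _)
      have h2 : ∑ i ∈ Finset.univ.erase i0, a i1 ^ 2 * y i ^ 2
          ≤ a i1 ^ 2 * Q := by
        rw [← Finset.mul_sum]
        have : ∑ i ∈ Finset.univ.erase i0, y i ^ 2 ≤ Q := by
          rw [hQ, ← Finset.add_sum_erase _ _ (Finset.mem_univ i0)]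
          nlinarith [sq_nonneg (y i0)]
        nlinarith [sq_nonneg (a i1)]
      linarith
    have hgap' : a i1 ≤ ε ^ 2 * a i0 := by
      have := hpos i0
      rw [div_le_iff₀ this] at hgap
      calc a i1 = a ⟨1, by omega⟩ := rfl
        _ ≤ ε ^ 2 * a ⟨0, by omega⟩ := hgap
        _ = ε ^ 2 * a i0 := rfl
    -- core inequality
    have hcore : Nz - (z i0) ^ 2 ≤ ε ^ 2 * Nz := by
      have ha0 := hpos i0
      have ha1 := hpos i1
      have h0 : a i1 * a i1 ≤ (ε ^ 2 * a i0) * (ε ^ 2 * a i0) :=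
        mul_le_mul hgap' hgap' ha1.le (by positivity)
      have h1 : a i1 ^ 2 ≤ ε ^ 4 * a i0 ^ 2 := by nlinarith [h0]
      have h2 : a i1 ^ 2 * Q ≤ ε ^ 4 * a i0 ^ 2 * Q :=
        mul_le_mul_of_nonneg_right h1 hQpos.le
      have h3 : ε ^ 4 * a i0 ^ 2 * Q = ε ^ 2 * a i0 ^ 2 * (ε ^ 2 * Q) := by ring
      have h4 : ε ^ 2 * a i0 ^ 2 * (ε ^ 2 * Q) ≤ ε ^ 2 * a i0 ^ 2 * y i0 ^ 2 :=
        mul_le_mul_of_nonneg_left hkey (by positivity)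
      have h5 : ε ^ 2 * a i0 ^ 2 * y i0 ^ 2 = ε ^ 2 * (z i0) ^ 2 := by rw [hzi0]; ring
      have h6 : ε ^ 2 * (z i0) ^ 2 ≤ ε ^ 2 * Nz := by
        have : (z i0) ^ 2 ≤ Nz := by linarith
        exact mul_le_mul_of_nonneg_left this (by positivity)
      linarith
    unfold projDist eucNorm
    rw [wedgeNorm_eq, hD, ← hNz, hE, Real.sqrt_one, mul_one, mul_one]
    rw [div_le_iff₀ (Real.sqrt_pos.mpr hNzpos)]
    calc Real.sqrt (Nz - z i0 ^ 2) ≤ Real.sqrt (ε ^ 2 * Nz) := Real.sqrt_le_sqrt hcore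
      _ = ε * Real.sqrt Nz := by
          rw [Real.sqrt_mul (by positivity), Real.sqrt_sq hε.le]
  exact hgoal
end

section
/- Let G be a connected real Lie group arising as G = 𝔾(ℝ)⁰ for a Zariski-connected ℝ-algebraic group 𝔾, let Γ be a dense subgroup of G, and let π : Γ → G be a group homomorphism with Zariski-dense image. Then for every identity neighborhood U ⊆ G, the set π(U ∩ Γ) is Zariski-dense in 𝔾. -/
/-!
By Noetherianity of the polynomial ring, among the Zariski closures of `π(V)`, for `V` ranging
over the identity neighbourhoods of `Γ` inside `U`, there is a minimal one `Z`, attained at some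
`V`. Choose an identity neighbourhood `V₁` with `V₁ V₁ ⊆ V`. Minimality gives that `π(V₁)` is also
Zariski dense in `Z`, and `π(γ) π(V₁) ⊆ π(V)` for `γ ∈ V₁`, so `π(γ) Z ⊆ Z`. Hence `π(γ)`
stabilises `Z` for `γ` in the symmetric neighbourhood `V₁ ∩ V₁⁻¹`. As `Γ` is dense in the
connected group `G`, any identity neighbourhood of `Γ` generates `Γ`. So `π(Γ)` stabilises `Z`,
and since `1 ∈ Z`, `π(Γ) ⊆ Z`. By Zariski density of `π(Γ)`, `G ⊆ Z`, while `Z` lies in the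
Zariski closure of `π(U ∩ Γ)`.
-/

/-- A subset of `n × n` real matrices is Zariski-closed if it is the common zero locus of a set
of polynomials in the matrix entries. -/
def MatZariskiClosed (n : ℕ) (S : Set (Matrix (Fin n) (Fin n) ℝ)) : Prop :=
  ∃ T : Set (MvPolynomial (Fin n × Fin n) ℝ),
    S = {M | ∀ p ∈ T, MvPolynomial.eval (fun q => M q.1 q.2) p = 0}

open MvPolynomial Pointwise Topology

theorem Filter.exists_mem_subset_forall_eq_of_antitone {α β : Type*} [PartialOrder β]
    [WellFoundedGT β] {f : Filter α} {F : Set α → β} (hF : Antitone F) {U : Set α}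
    (hU : U ∈ f) : ∃ V₀ ∈ f, V₀ ⊆ U ∧ ∀ V ∈ f, V ⊆ V₀ → F V = F V₀ := by
  obtain ⟨_, ⟨V₀, ⟨hV₀, hV₀U⟩, rfl⟩, hmax⟩ :=
    wellFounded_gt.has_min (F '' {V | V ∈ f ∧ V ⊆ U}) ⟨F U, U, ⟨hU, subset_rfl⟩, rfl⟩
  refine ⟨V₀, hV₀, hV₀U, fun V hV hVV₀ => ?_⟩
  exact ((hF hVV₀).lt_or_eq.resolve_left (hmax _ ⟨V, ⟨hV, hVV₀.trans hV₀U⟩, rfl⟩)).symm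

section TopologicalGroup

variable {X : Type*} [Group X] [TopologicalSpace X] [IsTopologicalGroup X]

theorem Subgroup.le_topologicalClosure_of_isConnected {G H : Subgroup X}
    (hG : IsConnected (G : Set X)) {O : Set X} (hO : O ∈ 𝓝 1)
    (hOH : (G : Set X) ∩ O ⊆ H.topologicalClosure) : G ≤ H.topologicalClosure := by
  have : ConnectedSpace G := isConnected_iff_connectedSpace.mp hG
  set K := H.topologicalClosure.comap G.subtype
  have hK : IsOpen (K : Set G) := K.isOpen_of_mem_nhds (g := 1) <|
    Filter.mem_of_superset (continuous_subtype_val.continuousAt.preimage_mem_nhds hO)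
      fun x hx => hOH ⟨x.2, hx⟩
  have hK_univ : (K : Set G) = Set.univ :=
    IsClopen.eq_univ ⟨K.isClosed_of_isOpen hK, hK⟩ ⟨1, K.one_mem⟩
  exact fun x hx => (Set.ext_iff.1 hK_univ ⟨x, hx⟩).2 trivial

theorem Subgroup.closure_eq_top_of_mem_nhds_one {G Γ : Subgroup X}
    (hG : IsConnected (G : Set X)) (hΓG : Γ ≤ G) (hdense : (G : Set X) ⊆ _root_.closure Γ)
    {W : Set Γ} (hW : W ∈ 𝓝 1) : closure W = ⊤ := by
  obtain ⟨O, hO, hOW⟩ := (mem_nhds_subtype _ _ _).1 hW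
  have hOH : interior O ∩ Γ ⊆ (closure W).map Γ.subtype := fun x ⟨hxO, hxΓ⟩ =>
    ⟨⟨x, hxΓ⟩, subset_closure (hOW (interior_subset (s := O) hxO)), rfl⟩
  have hGH := le_topologicalClosure_of_isConnected hG (interior_mem_nhds.2 hO)
    fun x ⟨hxG, hxO⟩ => _root_.closure_mono hOH (isOpen_interior.inter_closure ⟨hxO, hdense hxG⟩)
  refine eq_top_iff.2 fun γ _ => ?_
  have hγ : γ ∈ _root_.closure (closure W : Set Γ) := closure_subtype.2 <| by
    simpa only [← SetLike.mem_coe, topologicalClosure_coe, coe_map, coe_subtype]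
      using hGH (hΓG γ.2)
  have hnhds : {x : Γ | x⁻¹ * γ ∈ W} ∈ 𝓝 γ :=
    (by fun_prop : Continuous fun x : Γ => x⁻¹ * γ).continuousAt.preimage_mem_nhds
      (by simpa using hW)
  obtain ⟨h, hhW, hhH⟩ := mem_closure_iff_nhds.1 hγ _ hnhds
  simpa using mul_mem hhH (subset_closure hhW)

end TopologicalGroup

noncomputable def matZariskiClosure (n : ℕ) (A : Set (Matrix (Fin n) (Fin n) ℝ)) :
    Set (Matrix (Fin n) (Fin n) ℝ) :=
  Function.uncurry ⁻¹' zeroLocus ℝ (vanishingIdeal ℝ (Function.uncurry '' A) :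
    Ideal (MvPolynomial (Fin n × Fin n) ℝ))

section ZariskiClosure

variable {n : ℕ}

theorem matZariskiClosed_matZariskiClosure (A : Set (Matrix (Fin n) (Fin n) ℝ)) :
    MatZariskiClosed n (matZariskiClosure n A) :=
  ⟨vanishingIdeal ℝ (Function.uncurry '' A), by ext; simp; rfl⟩

theorem subset_matZariskiClosure (A : Set (Matrix (Fin n) (Fin n) ℝ)) :
    A ⊆ matZariskiClosure n A :=
  fun _ hM => zeroLocus_vanishingIdeal_le _ (Set.mem_image_of_mem _ hM)

theorem matZariskiClosure_minimal {A S : Set (Matrix (Fin n) (Fin n) ℝ)} (hAS : A ⊆ S)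
    (hS : MatZariskiClosed n S) : matZariskiClosure n A ⊆ S := by
  obtain ⟨T, rfl⟩ := hS
  intro M hM p hp
  refine hM p (mem_vanishingIdeal_iff.2 ?_)
  rintro _ ⟨N, hN, rfl⟩
  exact hAS hN p hp

theorem MatZariskiClosed.preimage_mul_left {S : Set (Matrix (Fin n) (Fin n) ℝ)}
    (hS : MatZariskiClosed n S) (A : Matrix (Fin n) (Fin n) ℝ) :
    MatZariskiClosed n ((A * ·) ⁻¹' S) := by
  obtain ⟨T, rfl⟩ := hS
  set mulLeft : Fin n × Fin n → MvPolynomial (Fin n × Fin n) ℝ :=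
    fun q => ∑ k, C (A q.1 k) * X (k, q.2)
  have eval_bind₁_mulLeft (M : Matrix (Fin n) (Fin n) ℝ) (p : MvPolynomial (Fin n × Fin n) ℝ) :
      eval (fun q => M q.1 q.2) (bind₁ mulLeft p) = eval (fun q => (A * M) q.1 q.2) p :=
    (eval₂Hom_bind₁ (RingHom.id ℝ) _ _ p).trans
      (congrArg (eval · p) (by ext; simp [mulLeft, Matrix.mul_apply]))
  refine ⟨bind₁ mulLeft '' T, ?_⟩
  ext M
  simp only [Set.mem_preimage, Set.mem_ofPred_eq, Set.forall_mem_image, eval_bind₁_mulLeft]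

theorem smul_matZariskiClosure_subset {A B : Set (Matrix (Fin n) (Fin n) ℝ)}
    {g : GL (Fin n) ℝ} (h : g • A ⊆ B) : g • matZariskiClosure n A ⊆ matZariskiClosure n B := by
  rw [← Set.image_smul, Set.image_subset_iff] at h ⊢
  exact matZariskiClosure_minimal (h.trans (Set.preimage_mono (subset_matZariskiClosure B)))
    ((matZariskiClosed_matZariskiClosure B).preimage_mul_left _)

variable {Γ : Type*} [Group Γ] [TopologicalSpace Γ] [IsTopologicalGroup Γ]
  (π : Γ →* GL (Fin n) ℝ)

theorem exists_mem_nhds_smul_matZariskiClosure_image_eq {U : Set Γ} (hU : U ∈ 𝓝 1) :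
    ∃ V ∈ 𝓝 1, V ⊆ U ∧ ∃ W ∈ 𝓝 1, ∀ γ ∈ W,
      π γ • matZariskiClosure n ((fun δ => (π δ : Matrix (Fin n) (Fin n) ℝ)) '' V) =
        matZariskiClosure n ((fun δ => (π δ : Matrix (Fin n) (Fin n) ℝ)) '' V) := by
  set img : Set Γ → Set (Matrix (Fin n) (Fin n) ℝ) :=
    fun V => (fun δ => (π δ : Matrix (Fin n) (Fin n) ℝ)) '' V
  obtain ⟨V, hV, hVU, hmin⟩ := Filter.exists_mem_subset_forall_eq_of_antitone
    (F := fun V => (vanishingIdeal ℝ (Function.uncurry '' img V) :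
      Ideal (MvPolynomial (Fin n × Fin n) ℝ)))
    (fun _ _ h => vanishingIdeal_anti_mono (Set.image_mono (Set.image_mono h))) hU
  obtain ⟨V₁, hV₁, hV₁V₁⟩ := exists_nhds_one_split hV
  have hV₁V : V₁ ⊆ V := fun γ hγ => by simpa using hV₁V₁ γ hγ 1 (mem_of_mem_nhds hV₁)
  have hZ : ∀ γ ∈ V₁, π γ • matZariskiClosure n (img V) ⊆ matZariskiClosure n (img V) := by
    intro γ hγ
    have hsub : π γ • img V₁ ⊆ img V := by
      rintro _ ⟨_, ⟨δ, hδ, rfl⟩, rfl⟩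
      exact ⟨γ * δ, hV₁V₁ γ hγ δ hδ, by simp⟩
    have := smul_matZariskiClosure_subset hsub
    rwa [matZariskiClosure, hmin V₁ hV₁ hV₁V] at this
  refine ⟨V, hV, hVU, V₁ ∩ V₁⁻¹, Filter.inter_mem hV₁ (inv_mem_nhds_one Γ hV₁), ?_⟩
  rintro γ ⟨hγ, hγ_inv⟩
  refine (hZ γ hγ).antisymm (Set.subset_smul_set_iff.2 ?_)
  simpa using hZ γ⁻¹ hγ_inv

theorem exists_subset_forall_mem_matZariskiClosure_image
    (hgen : ∀ W ∈ 𝓝 (1 : Γ), Subgroup.closure W = ⊤) {U : Set Γ} (hU : U ∈ 𝓝 1) :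
    ∃ V ⊆ U, ∀ γ, (π γ : Matrix (Fin n) (Fin n) ℝ) ∈
      matZariskiClosure n ((fun δ => (π δ : Matrix (Fin n) (Fin n) ℝ)) '' V) := by
  obtain ⟨V, hV, hVU, W, hW, hWZ⟩ := exists_mem_nhds_smul_matZariskiClosure_image_eq π hU
  refine ⟨V, hVU, fun γ => ?_⟩
  set Z := matZariskiClosure n ((fun δ => (π δ : Matrix (Fin n) (Fin n) ℝ)) '' V)
  have hstab : Subgroup.closure W ≤ (MulAction.stabilizer _ Z).comap π :=
    (Subgroup.closure_le _).2 hWZ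
  rw [hgen W hW, top_le_iff] at hstab
  have hZ_one : (1 : Matrix (Fin n) (Fin n) ℝ) ∈ Z :=
    subset_matZariskiClosure _ ⟨1, mem_of_mem_nhds hV, by simp⟩
  have := Set.smul_mem_smul_set (a := π γ) hZ_one
  rwa [(Subgroup.eq_top_iff' _).1 hstab γ, Units.smul_def, smul_eq_mul, mul_one] at this

end ZariskiClosure

theorem stmt16_general (n : ℕ) (G : Subgroup (GL (Fin n) ℝ))
    -- `G` is connected for the real topology
    (hconn : IsConnected (G : Set (GL (Fin n) ℝ)))
    -- `Γ` is a dense subgroup of `G`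
    (Γ : Subgroup (GL (Fin n) ℝ)) (hΓG : Γ ≤ G)
    (hdense : (G : Set (GL (Fin n) ℝ)) ⊆ closure (Γ : Set (GL (Fin n) ℝ)))
    -- `π : Γ → G` a homomorphism whose image is Zariski-dense in `G`
    (π : Γ →* GL (Fin n) ℝ)
    (hZdense : ∀ S : Set (Matrix (Fin n) (Fin n) ℝ), MatZariskiClosed n S →
      {M | ∃ γ : Γ, M = ((π γ : GL (Fin n) ℝ) : Matrix (Fin n) (Fin n) ℝ)} ⊆ S →
      ((fun g : GL (Fin n) ℝ => (g : Matrix (Fin n) (Fin n) ℝ)) '' G) ⊆ S) :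
    -- then for any identity neighborhood `U`, `π(U ∩ Γ)` is Zariski-dense in `G`
    ∀ U : Set (GL (Fin n) ℝ), IsOpen U → (1 : GL (Fin n) ℝ) ∈ U →
      ∀ S : Set (Matrix (Fin n) (Fin n) ℝ), MatZariskiClosed n S →
        {M | ∃ γ : Γ, (γ : GL (Fin n) ℝ) ∈ U ∧
            M = ((π γ : GL (Fin n) ℝ) : Matrix (Fin n) (Fin n) ℝ)} ⊆ S →
        ((fun g : GL (Fin n) ℝ => (g : Matrix (Fin n) (Fin n) ℝ)) '' G) ⊆ S := by
  intro U hU hU1 S hS hUS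
  obtain ⟨V, hVU, hπV⟩ := exists_subset_forall_mem_matZariskiClosure_image π
    (fun _ => Subgroup.closure_eq_top_of_mem_nhds_one hconn hΓG hdense)
    ((hU.preimage continuous_subtype_val).mem_nhds hU1)
  refine (hZdense _ (matZariskiClosed_matZariskiClosure
    ((fun γ => (π γ : Matrix (Fin n) (Fin n) ℝ)) '' V)) ?_).trans
      (matZariskiClosure_minimal ?_ hS)
  · rintro _ ⟨γ, rfl⟩
    exact hπV γ
  · rintro _ ⟨γ, hγ, rfl⟩
    exact hUS ⟨γ, hVU hγ, rfl⟩

/-- Let `G ≤ GL_n(ℝ)` be a connected real Lie group of the form `𝔾(ℝ)⁰`, `Γ ≤ G` a dense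
subgroup, and `π : Γ → G` a group homomorphism with Zariski-dense image. Then for every
identity neighborhood `U`, the set `π(U ∩ Γ)` is Zariski-dense in `𝔾`. -/
theorem stmt16 (n : ℕ) (G : Subgroup (GL (Fin n) ℝ))
    -- `G` is connected for the real topology
    (hconn : IsConnected (G : Set (GL (Fin n) ℝ)))
    -- `Γ` is a dense subgroup of `G`
    (Γ : Subgroup (GL (Fin n) ℝ)) (hΓG : Γ ≤ G)
    (hdense : (G : Set (GL (Fin n) ℝ)) ⊆ closure (Γ : Set (GL (Fin n) ℝ)))
    -- `π : Γ → G` a homomorphism whose image is Zariski-dense in `G`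
    (π : Γ →* GL (Fin n) ℝ) (hπG : ∀ γ : Γ, π γ ∈ G)
    (hZdense : ∀ S : Set (Matrix (Fin n) (Fin n) ℝ), MatZariskiClosed n S →
      {M | ∃ γ : Γ, M = ((π γ : GL (Fin n) ℝ) : Matrix (Fin n) (Fin n) ℝ)} ⊆ S →
      ((fun g : GL (Fin n) ℝ => (g : Matrix (Fin n) (Fin n) ℝ)) '' G) ⊆ S) :
    -- then for any identity neighborhood `U`, `π(U ∩ Γ)` is Zariski-dense in `G`
    ∀ U : Set (GL (Fin n) ℝ), IsOpen U → (1 : GL (Fin n) ℝ) ∈ U →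
      ∀ S : Set (Matrix (Fin n) (Fin n) ℝ), MatZariskiClosed n S →
        {M | ∃ γ : Γ, (γ : GL (Fin n) ℝ) ∈ U ∧
            M = ((π γ : GL (Fin n) ℝ) : Matrix (Fin n) (Fin n) ℝ)} ⊆ S →
        ((fun g : GL (Fin n) ℝ => (g : Matrix (Fin n) (Fin n) ℝ)) '' G) ⊆ S :=
  stmt16_general n G hconn Γ hΓG hdense π hZdense
end

section
/- Let G be a connected Lie group, Γ ≤ G a dense subgroup, and define G₁ = closure of [G,G]. Then [Γ,Γ] is dense in G₁; more generally, for the derived series Γ^{(n)} and the sequence G_{n+1} = closure of [G_n,G_n], the subgroup Γ^{(n)} ∩ G_n is dense in G_n for all n. -/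
/-!
The commutator map is continuous, so `[closure H, closure K] ⊆ closure [H, K]` for subgroups
`H, K`. Hence if `G_n ⊆ closure (Γ⁽ⁿ⁾ ∩ G_n)`, then `G_{n+1}` lies in the closure of
`[Γ⁽ⁿ⁾ ∩ G_n, Γ⁽ⁿ⁾ ∩ G_n] ⊆ Γ⁽ⁿ⁺¹⁾ ∩ G_{n+1}`.
-/

open scoped commutatorElement

namespace Subgroup

variable {G : Type*} [Group G] [TopologicalSpace G] [IsTopologicalGroup G]

theorem commutator_topologicalClosure_le (H K : Subgroup G) :
    ⁅H.topologicalClosure, K.topologicalClosure⁆ ≤ ⁅H, K⁆.topologicalClosure := by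
  rw [commutator_le]
  intro a ha b hb
  have hcont : Continuous fun p : G × G => ⁅p.1, p.2⁆ := by
    simp only [commutatorElement_def]
    fun_prop
  exact map_mem_closure₂ hcont ha hb fun x hx y hy => commutator_mem_commutator hx hy

theorem topologicalClosure_commutator_le_of_le {A B H K : Subgroup G}
    (hA : A ≤ H.topologicalClosure) (hB : B ≤ K.topologicalClosure) :
    ⁅A, B⁆.topologicalClosure ≤ ⁅H, K⁆.topologicalClosure :=
  topologicalClosure_minimal _
    ((commutator_mono hA hB).trans (commutator_topologicalClosure_le H K))
    (isClosed_topologicalClosure _)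

end Subgroup

theorem stmt18_general {G : Type*} [Group G] [TopologicalSpace G] [IsTopologicalGroup G]
    (Γ : Subgroup G) (hΓ : Dense (Γ : Set G))
    (D : ℕ → Subgroup G) (hD0 : D 0 = ⊤)
    (hDsucc : ∀ n, D (n + 1) = (⁅D n, D n⁆ : Subgroup G).topologicalClosure)
    (C : ℕ → Subgroup G) (hC0 : C 0 = Γ)
    (hCsucc : ∀ n, C (n + 1) = (⁅C n, C n⁆ : Subgroup G)) :
    ∀ n, ((D n : Subgroup G) : Set G) ⊆
      closure (((C n : Subgroup G) : Set G) ∩ ((D n : Subgroup G) : Set G)) := by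
  intro n
  change D n ≤ (C n ⊓ D n).topologicalClosure
  induction n with
  | zero =>
    rw [hD0, hC0, inf_top_eq]
    exact fun x _ => hΓ x
  | succ n ih =>
    have hC : ⁅C n ⊓ D n, C n ⊓ D n⁆ ≤ C (n + 1) :=
      hCsucc n ▸ Subgroup.commutator_mono inf_le_left inf_le_left
    have hD : ⁅C n ⊓ D n, C n ⊓ D n⁆ ≤ D (n + 1) :=
      hDsucc n ▸ (Subgroup.commutator_mono inf_le_right inf_le_right).trans
        (Subgroup.le_topologicalClosure _)
    calc D (n + 1) = ⁅D n, D n⁆.topologicalClosure := hDsucc n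
      _ ≤ ⁅C n ⊓ D n, C n ⊓ D n⁆.topologicalClosure :=
        Subgroup.topologicalClosure_commutator_le_of_le ih ih
      _ ≤ (C (n + 1) ⊓ D (n + 1)).topologicalClosure :=
        Subgroup.topologicalClosure_mono (le_inf hC hD)

/-- Let `G` be a connected (Lie) group and `Γ ≤ G` dense. With `G₀ = G`,
`G_{n+1} = closure [G_n, G_n]`, and `Γ⁽⁰⁾ = Γ`, `Γ⁽ⁿ⁺¹⁾ = [Γ⁽ⁿ⁾, Γ⁽ⁿ⁾]` the derived series of
`Γ`, the subgroup `Γ⁽ⁿ⁾ ∩ G_n` is dense in `G_n` for every `n`; in particular (`n = 1`)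
`[Γ,Γ]` is dense in the closure of `[G,G]`. -/
theorem stmt18 {G : Type*} [Group G] [TopologicalSpace G] [IsTopologicalGroup G]
    [ConnectedSpace G]
    (Γ : Subgroup G) (hΓ : Dense (Γ : Set G))
    (D : ℕ → Subgroup G) (hD0 : D 0 = ⊤)
    (hDsucc : ∀ n, D (n + 1) = (⁅D n, D n⁆ : Subgroup G).topologicalClosure)
    (C : ℕ → Subgroup G) (hC0 : C 0 = Γ)
    (hCsucc : ∀ n, C (n + 1) = (⁅C n, C n⁆ : Subgroup G)) :
    ∀ n, ((D n : Subgroup G) : Set G) ⊆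
      closure (((C n : Subgroup G) : Set G) ∩ ((D n : Subgroup G) : Set G)) :=
  stmt18_general Γ hΓ D hD0 hDsucc C hC0 hCsucc
end
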